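/- arXiv:quant-ph/0109101 — 2 statements merged into one kernel-verified Lean document; each statement's English description precedes it below -/
import Mathlib

section
/- For any integer d ≥ 0 and even N = 2m ≥ 2, if 2^(N-d) divides 2^(2m-1) - (1/2)·C(2m,m), then d ≥ N + 1 - w(N). -/
/-!
By Kummer's theorem the 2-adic valuation of `C(2m, m)` is the binary digit sum `w` of `m`
(which is also that of `2m`), so `C(2m, m) / 2` has valuation `w - 1 < 2m - 1`. Subtracting a
number of valuation below `2m - 1` from `2^(2m-1)` keeps its valuation, so `2^(2m-d)` can divide
the difference only if `2m - d ≤ w - 1`.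
-/

theorem padicValNat_pow_sub {p n x : ℕ} [Fact p.Prime] (hx : x < p ^ n) (hx₀ : x ≠ 0)
    (hxn : padicValNat p x < n) : padicValNat p (p ^ n - x) = padicValNat p x := by
  have hsub : p ^ n - x ≠ 0 := Nat.sub_ne_zero_of_lt hx
  have hdvd_iff {k : ℕ} (hk : k ≤ n) : p ^ k ∣ p ^ n - x ↔ p ^ k ∣ x :=
    Nat.dvd_sub_iff_right hx.le (pow_dvd_pow p hk)
  refine le_antisymm ?_ ?_
  · by_contra! hlt
    exact pow_succ_padicValNat_not_dvd hx₀ <|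
      (hdvd_iff hxn).1 ((padicValNat_dvd_iff_le hsub).2 hlt)
  · exact (padicValNat_dvd_iff_le hsub).1 ((hdvd_iff hxn.le).2 pow_padicValNat_dvd)

theorem Nat.one_le_sum_digits (b : ℕ) {m : ℕ} (hm : m ≠ 0) : 1 ≤ (Nat.digits b m).sum :=
  (Nat.pos_of_ne_zero (Nat.getLast_digit_ne_zero b hm)).trans_le
    (List.le_sum_of_mem (List.getLast_mem _))

theorem Nat.sum_digits_two_mul (m : ℕ) : (Nat.digits 2 (2 * m)).sum = (Nat.digits 2 m).sum := by
  rcases Nat.eq_zero_or_pos m with rfl | hm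
  · rfl
  · simp [Nat.digits_base_mul one_lt_two hm]

theorem Nat.two_dvd_choose_two_mul {m : ℕ} (hm : m ≠ 0) : 2 ∣ (2 * m).choose m :=
  Nat.centralBinom_eq_two_mul_choose m ▸ Nat.two_dvd_centralBinom_of_one_le (Nat.pos_of_ne_zero hm)

theorem Nat.choose_two_mul_div_two_lt {m : ℕ} (hm : m ≠ 0) :
    (2 * m).choose m / 2 < 2 ^ (2 * m - 1) := by
  have h := Nat.centralBinom_lt_four_pow hm
  rw [Nat.centralBinom_eq_two_mul_choose, show 4 ^ m = 2 ^ (2 * m - 1) * 2 by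
    rw [← pow_succ, Nat.sub_add_cancel (by omega), pow_mul]; rfl] at h
  exact Nat.div_lt_of_lt_mul (by linarith)

theorem padicValNat_two_choose_two_mul (m : ℕ) :
    padicValNat 2 ((2 * m).choose m) = (Nat.digits 2 m).sum := by
  have kummer := sub_one_mul_padicValNat_choose_eq_sub_sum_digits' (p := 2) (k := m) (n := m)
  rw [← two_mul, Nat.sum_digits_two_mul] at kummer
  omega

theorem padicValNat_two_choose_two_mul_div_two {m : ℕ} (hm : m ≠ 0) :
    padicValNat 2 ((2 * m).choose m / 2) = (Nat.digits 2 m).sum - 1 := by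
  rw [padicValNat.div_of_dvd (Nat.two_dvd_choose_two_mul hm), padicValNat_two_choose_two_mul,
    padicValNat_self]

theorem padicValNat_two_pow_sub_choose_two_mul_div_two {m : ℕ} (hm : m ≠ 0) :
    padicValNat 2 (2 ^ (2 * m - 1) - (2 * m).choose m / 2) = (Nat.digits 2 m).sum - 1 := by
  have hC : 2 ≤ (2 * m).choose m :=
    Nat.le_of_dvd (Nat.choose_pos (by omega)) (Nat.two_dvd_choose_two_mul hm)
  have hval := padicValNat_two_choose_two_mul_div_two hm
  have hs := Nat.digit_sum_le 2 m
  rw [padicValNat_pow_sub (Nat.choose_two_mul_div_two_lt hm) (by omega) (by omega), hval]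

/-- Arithmetic core of the PARITY-decision-tree lower bound for MAJORITY:
if 2^(N-d) divides 2^(2m-1) - (1/2)C(2m,m) for N = 2m ≥ 2, then
d ≥ N + 1 - w(N). -/
theorem stmt_8 (d m : ℕ) (hm : 1 ≤ m)
    (h : 2 ^ (2 * m - d) ∣ (2 ^ (2 * m - 1) - Nat.choose (2 * m) m / 2)) :
    2 * m + 1 - (Nat.digits 2 (2 * m)).sum ≤ d := by
  have hm₀ : m ≠ 0 := by omega
  have hy₀ : 2 ^ (2 * m - 1) - (2 * m).choose m / 2 ≠ 0 :=
    Nat.sub_ne_zero_of_lt (Nat.choose_two_mul_div_two_lt hm₀)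
  have hval := (padicValNat_dvd_iff_le hy₀).1 h
  rw [padicValNat_two_pow_sub_choose_two_mul_div_two hm₀] at hval
  have hs := Nat.one_le_sum_digits 2 hm₀
  rw [Nat.sum_digits_two_mul]
  omega
end

section
/- Any randomized decision tree computing MAJORITY on N bits with zero-sided error at most 1/2 has cost at least N. -/
/-- A classical decision tree querying single input bits, whose leaves may
output a Boolean answer or "I don't know" (`none`). -/
inductive ODTree (N : ℕ) where
  | leaf (b : Option Bool)
  | node (i : Fin N) (t0 t1 : ODTree N)

/-- Evaluation of a decision tree on an input. -/
def ODTree.eval {N : ℕ} : ODTree N → (Fin N → Bool) → Option Bool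
  | .leaf b, _ => b
  | .node i t0 t1, X => if X i then t1.eval X else t0.eval X

/-- Cost (worst-case number of queries = depth) of a decision tree. -/
def ODTree.cost {N : ℕ} : ODTree N → ℕ
  | .leaf _ => 0
  | .node _ t0 t1 => 1 + max t0.cost t1.cost

/-!
Let `s = ⌊N/2⌋ + 1` and let `L` be the layer of inputs with exactly `s` zeros: majority is false
on `L`, but turning any zero of a point of `L` into a one makes it true. Follow a deterministic
tree `T` of depth `< N` that never errs through the subcubes cut out by its queries. A leaf can
answer a point of `L` only if its subcube already fixes `s` zeros (otherwise setting all free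
coordinates to one makes majority true), and such a subcube meets `L` in a single point. Since
at least two coordinates are free at every inner node, the number of answered points of `L`
obeys Pascal's rule and is at most `C(N-1, s)`. Averaging over the random tree,
`|L| / 2 ≤ C(N-1, s)`, whereas `|L| = C(N, s) = C(N-1, s-1) + C(N-1, s) > 2 C(N-1, s)`.
-/

open Finset Function

section Cube

variable {ι : Type*} [Fintype ι]

def valCount (b : Bool) (X : ι → Bool) : ℕ := #{i | X i = b}

def majority (X : ι → Bool) : Bool := decide (valCount false X ≤ valCount true X)

theorem valCount_false_add_valCount_true (X : ι → Bool) :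
    valCount false X + valCount true X = Fintype.card ι := by
  simpa [valCount] using card_filter_add_card_filter_not (s := univ) (X · = false)

theorem majority_eq_false_iff (X : ι → Bool) :
    majority X = false ↔ Fintype.card ι / 2 + 1 ≤ valCount false X := by
  have := valCount_false_add_valCount_true X
  simp only [majority, decide_eq_false_iff_not, not_le]
  omega

theorem card_filter_valCount_eq [DecidableEq ι] (b : Bool) (s : ℕ) :
    #(univ.filter fun X : ι → Bool => valCount b X = s) = (Fintype.card ι).choose s := by
  rw [← card_univ, ← card_powersetCard]
  symm
  refine card_nbij' (fun S i => if i ∈ S then b else !b) (fun X => ({i | X i = b} : Finset ι))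
    ?_ ?_ ?_ ?_
  · intro S hS
    simp only [SetLike.mem_coe, mem_filter, mem_powersetCard, mem_univ, true_and] at hS ⊢
    rw [← hS.2, valCount]
    congr 1
    ext i
    by_cases i ∈ S <;> simp [*]
  · intro X hX
    simp only [SetLike.mem_coe, mem_filter, mem_powersetCard, mem_univ, true_and,
      subset_univ] at hX ⊢
    exact hX
  · intro S _
    ext i
    by_cases i ∈ S <;> simp [*]
  · intro X _
    funext i
    cases h : X i <;> cases b <;> simp [h]

end Cube

namespace PartialAssignment

variable {ι : Type*} {ρ : ι → Option Bool} {X : ι → Bool}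

def Extends (ρ : ι → Option Bool) (X : ι → Bool) : Prop := ∀ i b, ρ i = some b → X i = b

def fill (ρ : ι → Option Bool) (c : Bool) : ι → Bool := fun i => (ρ i).getD c

theorem extends_fill (ρ : ι → Option Bool) (c : Bool) : Extends ρ (fill ρ c) := by
  intro i b h
  simp [fill, h]

theorem extends_none (X : ι → Bool) : Extends (fun _ => none) X := by
  simp [Extends]

theorem extends_update_iff [DecidableEq ι] {i : ι} (hi : ρ i = none) (v : Bool) :
    Extends (update ρ i (some v)) X ↔ Extends ρ X ∧ X i = v := by
  constructor
  · intro h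
    refine ⟨fun j b hj => h j b ?_, h i v (by simp)⟩
    rwa [update_of_ne (by rintro rfl; simp [hi] at hj)]
  · rintro ⟨h, rfl⟩ j b hj
    rcases eq_or_ne j i with rfl | hji
    · simpa using hj
    · exact h j b (by rwa [update_of_ne hji] at hj)

variable [Fintype ι]

instance (ρ : ι → Option Bool) (X : ι → Bool) : Decidable (Extends ρ X) :=
  inferInstanceAs (Decidable (∀ i b, ρ i = some b → X i = b))

def numFree (ρ : ι → Option Bool) : ℕ := #{i | ρ i = none}

def numFixed (b : Bool) (ρ : ι → Option Bool) : ℕ := #{i | ρ i = some b}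

@[simp]
theorem numFree_none : numFree (fun _ : ι => (none : Option Bool)) = Fintype.card ι := by
  simp [numFree]

@[simp]
theorem numFixed_none (b : Bool) : numFixed b (fun _ : ι => (none : Option Bool)) = 0 := by
  simp [numFixed]

theorem valCount_fill_not (ρ : ι → Option Bool) (b : Bool) :
    valCount b (fill ρ (!b)) = numFixed b ρ := by
  unfold valCount numFixed fill
  congr 1
  ext i
  cases h : ρ i <;> simp [h]

theorem filter_fixed_subset (b : Bool) (h : Extends ρ X) :
    ({i | ρ i = some b} : Finset ι) ⊆ ({i | X i = b} : Finset ι) := by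
  intro i hi
  simp only [mem_filter, mem_univ, true_and] at hi ⊢
  exact h i b hi

theorem eq_fill_of_valCount_le {b : Bool} (h : Extends ρ X) (hX : valCount b X ≤ numFixed b ρ) :
    X = fill ρ (!b) := by
  have heq := eq_of_subset_of_card_le (filter_fixed_subset b h) hX
  funext i
  cases hρ : ρ i with
  | some v => simp [fill, hρ, h i v hρ]
  | none =>
    have : X i ≠ b := fun hb => by
      have := heq ▸ (mem_filter.2 ⟨mem_univ i, hb⟩ : i ∈ ({i | X i = b} : Finset ι))
      simp [hρ] at this
    cases b <;> simpa [fill, hρ] using this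

variable [DecidableEq ι]

theorem numFree_update {i : ι} (hi : ρ i = none) (v : Bool) :
    numFree (update ρ i (some v)) = numFree ρ - 1 := by
  have : ({j | update ρ i (some v) j = none} : Finset ι) =
      ({j | ρ j = none} : Finset ι).erase i := by
    ext j
    rcases eq_or_ne j i with rfl | hji <;> simp [update_of_ne, *]
  rw [numFree, this, card_erase_of_mem (by simp [hi]), numFree]

theorem numFixed_update {i : ι} (hi : ρ i = none) (b v : Bool) :
    numFixed b (update ρ i (some v)) = numFixed b ρ + if v = b then 1 else 0 := by
  split_ifs with hv
  · subst hv
    have : ({j | update ρ i (some v) j = some v} : Finset ι) =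
        insert i ({j | ρ j = some v} : Finset ι) := by
      ext j
      rcases eq_or_ne j i with rfl | hji <;> simp [update_of_ne, *]
    rw [numFixed, this, card_insert_of_notMem (by simp [hi]), numFixed]
  · unfold numFixed
    congr 1
    ext j
    rcases eq_or_ne j i with rfl | hji <;> simp [update_of_ne, *]

theorem choose_sub_numFixed_update_add {i : ι} (hi : ρ i = none) {b : Bool} {s : ℕ}
    (hs : numFixed b ρ < s) (m : ℕ) :
    m.choose (s - numFixed b (update ρ i (some false))) +
      m.choose (s - numFixed b (update ρ i (some true))) = (m + 1).choose (s - numFixed b ρ) := by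
  obtain ⟨k, hk⟩ : ∃ k, s - numFixed b ρ = k + 1 := ⟨s - numFixed b ρ - 1, by omega⟩
  rw [numFixed_update hi, numFixed_update hi, hk, Nat.choose_succ_succ']
  cases b <;> simp <;> grind

end PartialAssignment

namespace ODTree

open PartialAssignment

variable {N : ℕ}

theorem eval_node_of_eq {i : Fin N} {t0 t1 : ODTree N} {X : Fin N → Bool} {v : Bool}
    (h : X i = v) : (node i t0 t1).eval X = (cond v t1 t0).eval X := by
  cases v <;> simp [eval, h]

theorem filter_node_subset {ρ : Fin N → Option Bool} {i : Fin N} (hi : ρ i = none)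
    (t0 t1 : ODTree N) (P : (Fin N → Bool) → Prop) [DecidablePred P] :
    ({X | Extends ρ X ∧ P X ∧ (node i t0 t1).eval X ≠ none} : Finset _) ⊆
      ({X | Extends (update ρ i (some false)) X ∧ P X ∧ t0.eval X ≠ none} : Finset _) ∪
      ({X | Extends (update ρ i (some true)) X ∧ P X ∧ t1.eval X ≠ none} : Finset _) := by
  intro X hX
  simp only [mem_union, mem_filter, mem_univ, true_and, extends_update_iff hi] at hX ⊢
  obtain ⟨hρX, hPX, hans⟩ := hX
  cases hXi : X i
  · exact .inl ⟨⟨hρX, rfl⟩, hPX, by rwa [eval_node_of_eq hXi] at hans⟩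
  · exact .inr ⟨⟨hρX, rfl⟩, hPX, by rwa [eval_node_of_eq hXi] at hans⟩

theorem filter_node_eq_of_fixed {ρ : Fin N → Option Bool} {i : Fin N} {v : Bool}
    (hi : ρ i = some v) (t0 t1 : ODTree N) (P : (Fin N → Bool) → Prop) [DecidablePred P] :
    ({X | Extends ρ X ∧ P X ∧ (node i t0 t1).eval X ≠ none} : Finset _) =
      ({X | Extends ρ X ∧ P X ∧ (cond v t1 t0).eval X ≠ none} : Finset _) :=
  filter_congr fun X _ => and_congr_right fun hX => by rw [eval_node_of_eq (hX i v hi)]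

variable (f : (Fin N → Bool) → Bool) (b : Bool) (s : ℕ)

theorem card_answered_le_of_le_numFixed (T : ODTree N) {ρ : Fin N → Option Bool}
    (hs : s ≤ numFixed b ρ) :
    #{X | Extends ρ X ∧ valCount b X = s ∧ T.eval X ≠ none} ≤
      (numFree ρ - 1).choose (s - numFixed b ρ) := by
  rw [Nat.sub_eq_zero_of_le hs, Nat.choose_zero_right]
  refine card_le_one.2 fun X hX Y hY => ?_
  simp only [mem_filter, mem_univ, true_and] at hX hY
  rw [eq_fill_of_valCount_le hX.1 (hX.2.1 ▸ hs), eq_fill_of_valCount_le hY.1 (hY.2.1 ▸ hs)]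

theorem answered_leaf_eq_empty (hf : ∀ X, f X = b ↔ s ≤ valCount b X) {c : Option Bool}
    {ρ : Fin N → Option Bool} (hT : ∀ X, Extends ρ X → c = some (f X) ∨ c = none)
    (hs : numFixed b ρ < s) :
    ({X | Extends ρ X ∧ valCount b X = s ∧ (leaf c).eval X ≠ none} : Finset _) = ∅ := by
  refine filter_eq_empty_iff.2 fun X _ ⟨hX, hXs, hc⟩ => ?_
  have hfX : f X = b := (hf X).2 hXs.ge
  set Y := fill ρ (!b)
  have hfY : f Y = f X := by
    rcases hT X hX, hT Y (extends_fill ρ _) with ⟨hcX | hcX, hcY | hcY⟩ <;> simp_all [eval]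
  have := (hf Y).1 (hfY.trans hfX)
  rw [valCount_fill_not] at this
  omega

-- For `s ≤ numFixed b ρ` the truncated subtraction gives the bound `1`.
theorem card_answered_le (hf : ∀ X, f X = b ↔ s ≤ valCount b X) (T : ODTree N)
    (ρ : Fin N → Option Bool) (hT : ∀ X, Extends ρ X → T.eval X = some (f X) ∨ T.eval X = none)
    (hcost : T.cost < numFree ρ) :
    #{X | Extends ρ X ∧ valCount b X = s ∧ T.eval X ≠ none} ≤
      (numFree ρ - 1).choose (s - numFixed b ρ) := by
  induction T generalizing ρ with
  | leaf c =>
    rcases le_or_gt s (numFixed b ρ) with hs | hs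
    · exact card_answered_le_of_le_numFixed b s _ hs
    · simp [answered_leaf_eq_empty f b s hf hT hs]
  | node i t0 t1 ih0 ih1 =>
    rcases le_or_gt s (numFixed b ρ) with hs | hs
    · exact card_answered_le_of_le_numFixed b s _ hs
    simp only [cost] at hcost
    cases hρi : ρ i with
    | some v =>
      rw [filter_node_eq_of_fixed hρi]
      have hT' : ∀ X, Extends ρ X →
          (cond v t1 t0).eval X = some (f X) ∨ (cond v t1 t0).eval X = none :=
        fun X hX => eval_node_of_eq (hX i v hρi) ▸ hT X hX
      cases v
      · exact ih0 ρ hT' (by omega)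
      · exact ih1 ρ hT' (by omega)
    | none =>
      have hT' : ∀ v X, Extends (update ρ i (some v)) X →
          (cond v t1 t0).eval X = some (f X) ∨ (cond v t1 t0).eval X = none := by
        intro v X hX
        rw [extends_update_iff hρi] at hX
        exact eval_node_of_eq hX.2 ▸ hT X hX.1
      have h0 := ih0 _ (hT' false) (by rw [numFree_update hρi]; omega)
      have h1 := ih1 _ (hT' true) (by rw [numFree_update hρi]; omega)
      obtain ⟨m, hm⟩ : ∃ m, numFree ρ - 1 = m + 1 := ⟨numFree ρ - 2, by omega⟩
      rw [numFree_update hρi, hm, Nat.add_sub_cancel] at h0 h1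
      rw [hm, ← choose_sub_numFixed_update_add hρi hs]
      calc _ ≤ _ := card_le_card (filter_node_subset hρi t0 t1 _)
        _ ≤ _ := card_union_le _ _
        _ ≤ _ := add_le_add h0 h1

theorem card_answered_majority_le (T : ODTree N)
    (hT : ∀ X, T.eval X = some (majority X) ∨ T.eval X = none) (hcost : T.cost < N) :
    #{X ∈ univ.filter (valCount false · = N / 2 + 1) | T.eval X = some (majority X)} ≤
      (N - 1).choose (N / 2 + 1) := by
  have := T.card_answered_le majority false (N / 2 + 1)
    (fun X => by rw [majority_eq_false_iff, Fintype.card_fin]) (fun _ => none)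
    (fun X _ => hT X) (by simpa using hcost)
  simp only [numFree_none, numFixed_none, Fintype.card_fin, Nat.sub_zero] at this
  refine (card_le_card fun X hX => ?_).trans this
  simp only [mem_filter, mem_univ, true_and] at hX ⊢
  exact ⟨extends_none X, hX.1, by simp [hX.2]⟩

end ODTree

theorem PMF.card_mul_le_of_card_le {α β : Type*} (p : PMF α) (s : Finset β) (P : α → β → Prop)
    [∀ a, DecidablePred (P a)] {q : ENNReal} {m : ℕ}
    (hq : ∀ x ∈ s, q ≤ p.toOuterMeasure {a | P a x})
    (hm : ∀ a ∈ p.support, #{x ∈ s | P a x} ≤ m) :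
    #s * q ≤ m :=
  calc #s * q ≤ ∑ x ∈ s, p.toOuterMeasure {a | P a x} := by
        rw [← nsmul_eq_mul, ← sum_const]; exact sum_le_sum hq
    _ = ∑' a, ∑ x ∈ s, {a | P a x}.indicator p a := by
        simp only [PMF.toOuterMeasure_apply]
        exact (Summable.tsum_finsetSum fun _ _ => ENNReal.summable).symm
    _ = ∑' a, p a * #{x ∈ s | P a x} := by
        congr 1; funext a
        simp [Set.indicator_apply, sum_ite, mul_comm]
    _ ≤ ∑' a, p a * m := ENNReal.tsum_le_tsum fun a => by
        by_cases ha : a ∈ p.support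
        · gcongr; exact_mod_cast hm a ha
        · simp [(PMF.apply_eq_zero_iff p a).2 ha]
    _ = m := by rw [ENNReal.tsum_mul_right, p.tsum_coe, one_mul]

theorem Nat.choose_succ_lt_choose {n k : ℕ} (hk : k ≤ n) (h : n < 2 * k + 1) :
    n.choose (k + 1) < n.choose k := by
  have hpos : 0 < n.choose k := Nat.choose_pos hk
  refine Nat.lt_of_mul_lt_mul_right (a := k + 1) ?_
  rw [Nat.choose_succ_right_eq]
  exact Nat.mul_lt_mul_of_pos_left (by omega) hpos

theorem two_mul_choose_pred_lt_choose {N : ℕ} (hN : 0 < N) :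
    2 * (N - 1).choose (N / 2 + 1) < N.choose (N / 2 + 1) := by
  obtain ⟨n, rfl⟩ : ∃ n, N = n + 1 := ⟨N - 1, by omega⟩
  rw [Nat.choose_succ_succ', Nat.add_sub_cancel]
  have := Nat.choose_succ_lt_choose (n := n) (k := (n + 1) / 2) (by omega) (by omega)
  omega

/-- Any randomized decision tree computing MAJORITY on N bits with zero-sided
error at most 1/2 (on every input it answers correctly with probability at
least 1/2 and otherwise says "I don't know", never answering wrongly) has
cost at least N: some tree in its support has depth at least N. -/
theorem stmt_13 (N : ℕ) (𝒯 : PMF (ODTree N))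
    (hcorrect : ∀ X : Fin N → Bool,
      1 - 1 / 2 ≤ 𝒯.toOuterMeasure {T | T.eval X =
        some (decide ((Finset.univ.filter fun i => X i = false).card ≤
                      (Finset.univ.filter fun i => X i = true).card))})
    (hnever : ∀ X : Fin N → Bool, ∀ T ∈ 𝒯.support,
      T.eval X = some (decide ((Finset.univ.filter fun i => X i = false).card ≤
                               (Finset.univ.filter fun i => X i = true).card)) ∨
      T.eval X = none) :
    ∃ T ∈ 𝒯.support, N ≤ T.cost := by
  by_contra! hcost
  obtain ⟨T₀, hT₀⟩ := 𝒯.support_nonempty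
  have hN : 0 < N := (Nat.zero_le _).trans_lt (hcost T₀ hT₀)
  have hcard := 𝒯.card_mul_le_of_card_le _ (fun T X => T.eval X = some (majority X)) (q := 2⁻¹)
    (fun X _ => by rw [← ENNReal.one_sub_inv_two, ← one_div]; exact hcorrect X)
    (fun T hT => T.card_answered_majority_le (fun X => hnever X T hT) (hcost T hT))
  rw [card_filter_valCount_eq, Fintype.card_fin, ← div_eq_mul_inv,
    ENNReal.div_le_iff_le_mul (.inl two_ne_zero) (.inl ENNReal.ofNat_ne_top)] at hcard
  have hlt := two_mul_choose_pred_lt_choose hN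
  have hle : N.choose (N / 2 + 1) ≤ (N - 1).choose (N / 2 + 1) * 2 := by exact_mod_cast hcard
  omega
end
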